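/- arXiv:2603.24273 — 5 statements merged into one kernel-verified Lean document; each statement's English description precedes it below -/
import Mathlib

section
/- Let E be a set of equations, Φ a set of faults, φ a map assigning to each e ∈ E a set φ(e) ⊆ Φ, and F(M) = ⋃_{e∈M} φ(e) for M ⊆ E. Let 𝒯 be a family of subsets of E that is closed under unions of nonempty subfamilies. If F₀ is a fault signature (i.e., F₀ ≠ ∅ and F₀ = F(M') for some M' ∈ 𝒯), then there exists a unique set M ∈ 𝒯 such that F(M) = F₀ and M' ⊆ M for every M' ∈ 𝒯 with F(M') = F₀. -/
open Set

/-- The fault signature map: faults appearing in a set of equations. -/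
def faultsOf {E Φ : Type*} (φ : E → Set Φ) (M : Set E) : Set Φ := ⋃ e ∈ M, φ e

/-- If the family 𝒯 of testable PSO sets is closed under unions of
nonempty subfamilies and `F₀` is a fault signature, then there is a unique `M ∈ 𝒯`
with `F(M) = F₀` containing every `M' ∈ 𝒯` with `F(M') = F₀`. -/
theorem stmt0_unique_largest_testable_set
    {E Φ : Type*} (φ : E → Set Φ) (𝒯 : Set (Set E))
    (hclosed : ∀ 𝒞 ⊆ 𝒯, 𝒞.Nonempty → ⋃₀ 𝒞 ∈ 𝒯)
    (F₀ : Set Φ) (hF₀ : F₀.Nonempty ∧ ∃ M' ∈ 𝒯, faultsOf φ M' = F₀) :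
    ∃! M : Set E, M ∈ 𝒯 ∧ faultsOf φ M = F₀ ∧
      ∀ M' ∈ 𝒯, faultsOf φ M' = F₀ → M' ⊆ M := by
  obtain ⟨-, M₀, hM₀T, hM₀F⟩ := hF₀
  set 𝒞 : Set (Set E) := {M' | M' ∈ 𝒯 ∧ faultsOf φ M' = F₀} with h𝒞
  have hsub : 𝒞 ⊆ 𝒯 := fun x hx => hx.1
  have hne : 𝒞.Nonempty := ⟨M₀, hM₀T, hM₀F⟩
  have hmem : ⋃₀ 𝒞 ∈ 𝒯 := hclosed 𝒞 hsub hne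
  have hF : faultsOf φ (⋃₀ 𝒞) = F₀ := by
    apply subset_antisymm
    · intro x hx
      simp only [faultsOf, mem_iUnion] at hx
      obtain ⟨e, ⟨M', hM', heM'⟩, hxe⟩ := hx
      rw [← hM'.2]
      exact mem_iUnion₂.mpr ⟨e, heM', hxe⟩
    · intro x hx
      rw [← hM₀F] at hx
      simp only [faultsOf, mem_iUnion] at hx ⊢
      obtain ⟨e, he, hxe⟩ := hx
      exact ⟨e, ⟨M₀, ⟨hM₀T, hM₀F⟩, he⟩, hxe⟩
  refine ⟨⋃₀ 𝒞, ⟨hmem, hF, fun M' hM'T hM'F => subset_sUnion_of_mem ⟨hM'T, hM'F⟩⟩, ?_⟩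
  rintro M ⟨hMT, hMF, hMmax⟩
  apply subset_antisymm
  · exact subset_sUnion_of_mem ⟨hMT, hMF⟩
  · exact sUnion_subset fun M' hM' => hMmax M' hM'.1 hM'.2
end

section
/- Let E be a set of equations, Φ a set of faults, φ : E → Set Φ, F(M) = ⋃_{e∈M} φ(e), and 𝒯 a family of subsets of E closed under unions of nonempty subfamilies. Then the map M ↦ F(M), restricted to the collection of RG sets, is a bijection onto the collection of fault signatures. -/
open Set

/-- A fault signature: a nonempty set of faults realized by some testable set. -/
def IsFaultSignature {E Φ : Type*} (φ : E → Set Φ) (𝒯 : Set (Set E)) (F₀ : Set Φ) : Prop :=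
  F₀.Nonempty ∧ ∃ M ∈ 𝒯, faultsOf φ M = F₀

/-- An RG set: a testable set with nonempty fault signature that contains every
testable set with the same fault signature. -/
def IsRGSet {E Φ : Type*} (φ : E → Set Φ) (𝒯 : Set (Set E)) (M : Set E) : Prop :=
  M ∈ 𝒯 ∧ (faultsOf φ M).Nonempty ∧
    ∀ M' ∈ 𝒯, faultsOf φ M' = faultsOf φ M → M' ⊆ M

/-
Every testable set with signature `F₀` lies in the union of all of them, and closure under unions
makes that union testable with the same signature `F₀`: it is the unique RG set over `F₀`.
Conversely, two RG sets with the same signature contain each other.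
-/

section

variable {E Φ : Type*} (φ : E → Set Φ) (𝒯 : Set (Set E))

lemma faultsOf_sUnion (𝒞 : Set (Set E)) :
    faultsOf φ (⋃₀ 𝒞) = ⋃ M ∈ 𝒞, faultsOf φ M := by
  simp only [faultsOf, sUnion_eq_biUnion, biUnion_iUnion]

lemma faultsOf_sUnion_of_forall_eq {𝒞 : Set (Set E)} {F₀ : Set Φ} (h𝒞 : 𝒞.Nonempty)
    (hF : ∀ M ∈ 𝒞, faultsOf φ M = F₀) : faultsOf φ (⋃₀ 𝒞) = F₀ := by
  obtain ⟨M, hM⟩ := h𝒞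
  rw [faultsOf_sUnion]
  exact subset_antisymm (iUnion₂_subset fun N hN => (hF N hN).subset)
    (hF M hM ▸ subset_biUnion_of_mem hM)

variable {φ 𝒯}

lemma IsRGSet.isFaultSignature {M : Set E} (hM : IsRGSet φ 𝒯 M) :
    IsFaultSignature φ 𝒯 (faultsOf φ M) :=
  ⟨hM.2.1, M, hM.1, rfl⟩

lemma IsRGSet.eq_of_faultsOf_eq {M N : Set E} (hM : IsRGSet φ 𝒯 M) (hN : IsRGSet φ 𝒯 N)
    (h : faultsOf φ M = faultsOf φ N) : M = N :=
  subset_antisymm (hN.2.2 M hM.1 h) (hM.2.2 N hN.1 h.symm)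

variable (φ 𝒯)

def rgSetOf (F₀ : Set Φ) : Set E := ⋃₀ {M ∈ 𝒯 | faultsOf φ M = F₀}

variable {φ 𝒯}

lemma faultsOf_rgSetOf {F₀ : Set Φ} (hF₀ : IsFaultSignature φ 𝒯 F₀) :
    faultsOf φ (rgSetOf φ 𝒯 F₀) = F₀ :=
  let ⟨_, M, hM, hMF⟩ := hF₀
  faultsOf_sUnion_of_forall_eq φ ⟨M, hM, hMF⟩ fun _ hN => hN.2

lemma isRGSet_rgSetOf (hclosed : ∀ 𝒞 ⊆ 𝒯, 𝒞.Nonempty → ⋃₀ 𝒞 ∈ 𝒯) {F₀ : Set Φ}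
    (hF₀ : IsFaultSignature φ 𝒯 F₀) : IsRGSet φ 𝒯 (rgSetOf φ 𝒯 F₀) := by
  have hsig := faultsOf_rgSetOf hF₀
  obtain ⟨hne, M, hM, hMF⟩ := hF₀
  refine ⟨hclosed _ (fun _ hN => hN.1) ⟨M, hM, hMF⟩, hsig.symm ▸ hne, fun N hN hNF => ?_⟩
  exact subset_sUnion_of_mem ⟨hN, hNF.trans hsig⟩

end

/-- If 𝒯 is closed under unions of nonempty subfamilies, then
`M ↦ F(M)` is a bijection from the collection of RG sets onto the collection of
fault signatures. -/
theorem stmt2_RG_sets_biject_with_fault_signatures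
    {E Φ : Type*} (φ : E → Set Φ) (𝒯 : Set (Set E))
    (hclosed : ∀ 𝒞 ⊆ 𝒯, 𝒞.Nonempty → ⋃₀ 𝒞 ∈ 𝒯) :
    Set.BijOn (faultsOf φ) {M | IsRGSet φ 𝒯 M} {F₀ | IsFaultSignature φ 𝒯 F₀} :=
  ⟨fun _ hM => hM.isFaultSignature,
    fun _ hM _ hN h => hM.eq_of_faultsOf_eq hN h,
    fun _ hF₀ => ⟨rgSetOf φ 𝒯 _, isRGSet_rgSetOf hclosed hF₀, faultsOf_rgSetOf hF₀⟩⟩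
end

section
/- Let E and X be finite sets of equations and variables, var : E → Finset X, and φ(M) = |M| − |var(M)| for M ⊆ E, where var(M) = ⋃_{e∈M} var(e). If M is a PSO set and e ∈ M, then the maximum of φ over all subsets of M \ {e} equals φ(M) − 1; equivalently, φ((M \ {e})⁺) = φ(M) − 1, where (M \ {e})⁺ denotes the overdetermined part of M \ {e}. -/
open Finset

/-- The structural redundancy `φ(M) = |M| − |var(M)|` (as an integer). -/
def red {E X : Type*} [DecidableEq X] (var : E → Finset X) (M : Finset E) : ℤ :=
  (M.card : ℤ) - (M.biUnion var).card

/-- A set `M` is proper structurally overdetermined (PSO) if it is nonempty and every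
proper subset has strictly smaller redundancy. -/
def IsPSO {E X : Type*} [DecidableEq X] (var : E → Finset X) (M : Finset E) : Prop :=
  M.Nonempty ∧ ∀ M' ⊂ M, red var M' < red var M

/-! Removing one equation lowers the redundancy by at most one, since it removes one equation
and no new variable; in a PSO set it must lower it, hence by exactly one, and every subset
of `M \ {e}` is a proper subset of `M`. -/

section

variable {E X : Type*} [DecidableEq E] [DecidableEq X] (var : E → Finset X)
  {M M' : Finset E} {e : E}

theorem red_sub_one_le_red_erase (he : e ∈ M) : red var M - 1 ≤ red var (M.erase e) := by
  have hcard := card_erase_add_one he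
  have hvar : ((M.erase e).biUnion var).card ≤ (M.biUnion var).card :=
    card_le_card (biUnion_subset_biUnion_of_subset_left _ (erase_subset e M))
  unfold red
  omega

namespace IsPSO

variable {var}

theorem red_erase (hM : IsPSO var M) (he : e ∈ M) : red var (M.erase e) = red var M - 1 :=
  le_antisymm (Int.le_sub_one_of_lt (hM.2 _ (erase_ssubset he)))
    (red_sub_one_le_red_erase var he)

theorem red_le_of_subset_erase (hM : IsPSO var M) (he : e ∈ M) (hM' : M' ⊆ M.erase e) :
    red var M' ≤ red var M - 1 :=
  Int.le_sub_one_of_lt (hM.2 _ (hM'.trans_ssubset (erase_ssubset he)))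

end IsPSO

end

theorem stmt12_redundancy_drops_by_one_general
    {E X : Type*} [DecidableEq E] [DecidableEq X]
    (var : E → Finset X) (M : Finset E) (hM : IsPSO var M) (e : E) (he : e ∈ M) :
    IsGreatest {z : ℤ | ∃ M' ⊆ M.erase e, red var M' = z} (red var M - 1) := by
  refine ⟨⟨M.erase e, Subset.rfl, hM.red_erase he⟩, ?_⟩
  rintro _ ⟨M', hM', rfl⟩
  exact hM.red_le_of_subset_erase he hM'

/-- If `M` is a PSO set and `e ∈ M`, then the maximum of the
redundancy `φ` over all subsets of `M \ {e}` equals `φ(M) − 1`, i.e.,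
`φ((M \ {e})⁺) = φ(M) − 1`. -/
theorem stmt12_redundancy_drops_by_one
    {E X : Type*} [Fintype E] [Fintype X] [DecidableEq E] [DecidableEq X]
    (var : E → Finset X) (M : Finset E) (hM : IsPSO var M) (e : E) (he : e ∈ M) :
    IsGreatest {z : ℤ | ∃ M' ⊆ M.erase e, red var M' = z} (red var M - 1) :=
  stmt12_redundancy_drops_by_one_general var M hM e he
end

section
/- Let E and X be finite sets of equations and variables, var : E → Finset X, and φ(M) = |M| − |var(M)| for M ⊆ E, where var(M) = ⋃_{e∈M} var(e). If M₁ and M₂ are PSO sets, then M₁ ∪ M₂ is a PSO set. -/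
open Finset

lemma red_super {E X : Type*} [DecidableEq E] [DecidableEq X]
    (var : E → Finset X) (A B : Finset E) :
    red var A + red var B ≤ red var (A ∪ B) + red var (A ∩ B) := by
  have hc : (A ∪ B).card + (A ∩ B).card = A.card + B.card :=
    Finset.card_union_add_card_inter A B
  have hvU : (A ∪ B).biUnion var = A.biUnion var ∪ B.biUnion var := by
    ext x
    simp only [Finset.mem_biUnion, Finset.mem_union]
    constructor
    · rintro ⟨e, he | he, hx⟩
      · exact Or.inl ⟨e, he, hx⟩
      · exact Or.inr ⟨e, he, hx⟩
    · rintro (⟨e, he, hx⟩ | ⟨e, he, hx⟩)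
      · exact ⟨e, Or.inl he, hx⟩
      · exact ⟨e, Or.inr he, hx⟩
  have hvI : (A ∩ B).biUnion var ⊆ A.biUnion var ∩ B.biUnion var := by
    apply Finset.biUnion_subset.2
    intro e he
    simp only [Finset.mem_inter] at he
    exact Finset.subset_inter
      (Finset.subset_biUnion_of_mem var he.1 |>.trans (le_refl _))
      (Finset.subset_biUnion_of_mem var he.2)
  have hv : ((A ∪ B).biUnion var).card + ((A ∩ B).biUnion var).card
      ≤ (A.biUnion var).card + (B.biUnion var).card := by
    calc ((A ∪ B).biUnion var).card + ((A ∩ B).biUnion var).card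
        ≤ (A.biUnion var ∪ B.biUnion var).card + (A.biUnion var ∩ B.biUnion var).card := by
          rw [hvU]; exact add_le_add le_rfl (Finset.card_le_card hvI)
      _ = (A.biUnion var).card + (B.biUnion var).card :=
          Finset.card_union_add_card_inter _ _
  simp only [red]
  have hc' : ((A ∪ B).card : ℤ) + (A ∩ B).card = A.card + B.card := by exact_mod_cast hc
  have hv' : (((A ∪ B).biUnion var).card : ℤ) + ((A ∩ B).biUnion var).card
      ≤ (A.biUnion var).card + (B.biUnion var).card := by exact_mod_cast hv
  linarith

lemma red_step {E X : Type*} [DecidableEq E] [DecidableEq X]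
    (var : E → Finset X) {N : Finset E} (hN : IsPSO var N)
    {M' : Finset E} (h : M' ∩ N ⊂ N) :
    red var M' < red var (M' ∪ N) := by
  have := red_super var M' N
  have h2 := hN.2 _ h
  linarith

lemma red_aux {E X : Type*} [DecidableEq E] [DecidableEq X]
    (var : E → Finset X) {M₁ M₂ : Finset E}
    (h₁ : IsPSO var M₁) (h₂ : IsPSO var M₂)
    {M' : Finset E} (hss : M' ⊂ M₁ ∪ M₂) (hi : M' ∩ M₁ ⊂ M₁) :
    red var M' < red var (M₁ ∪ M₂) := by
  have step1 : red var M' < red var (M' ∪ M₁) := red_step var h₁ hi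
  by_cases hc : M' ∪ M₁ = M₁ ∪ M₂
  · rwa [hc] at step1
  · have hsub : M' ∪ M₁ ⊆ M₁ ∪ M₂ :=
      Finset.union_subset hss.subset (Finset.subset_union_left)
    have hi2 : (M' ∪ M₁) ∩ M₂ ⊂ M₂ := by
      refine Finset.ssubset_iff_subset_ne.2 ⟨Finset.inter_subset_right, ?_⟩
      intro heq
      apply hc
      apply Finset.Subset.antisymm hsub
      have hm2 : M₂ ⊆ M' ∪ M₁ := by
        intro x hx
        have hx' : x ∈ (M' ∪ M₁) ∩ M₂ := by rw [heq]; exact hx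
        exact (Finset.mem_inter.1 hx').1
      exact Finset.union_subset Finset.subset_union_right hm2
    have step2 : red var (M' ∪ M₁) < red var (M' ∪ M₁ ∪ M₂) := red_step var h₂ hi2
    have heq2 : M' ∪ M₁ ∪ M₂ = M₁ ∪ M₂ := by
      apply Finset.Subset.antisymm
      · exact Finset.union_subset hsub Finset.subset_union_right
      · intro x hx; simp only [Finset.mem_union] at hx ⊢; tauto
    rw [heq2] at step2
    linarith

/-- The union of two PSO sets is a PSO set. -/
theorem stmt13_union_of_PSO_sets
    {E X : Type*} [Fintype E] [Fintype X] [DecidableEq E] [DecidableEq X]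
    (var : E → Finset X) (M₁ M₂ : Finset E)
    (h₁ : IsPSO var M₁) (h₂ : IsPSO var M₂) :
    IsPSO var (M₁ ∪ M₂) := by
  refine ⟨h₁.1.mono Finset.subset_union_left, ?_⟩
  intro M' hss
  by_cases hi1 : M' ∩ M₁ ⊂ M₁
  · exact red_aux var h₁ h₂ hss hi1
  · by_cases hi2 : M' ∩ M₂ ⊂ M₂
    · rw [Finset.union_comm]
      rw [Finset.union_comm] at hss
      exact red_aux var h₂ h₁ hss hi2
    · exfalso
      have g1 : M₁ ⊆ M' := by
        have h := mt (Finset.ssubset_iff_subset_ne.2) hi1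
        push_neg at h
        have heq := h Finset.inter_subset_right
        intro x hx
        have hx' : x ∈ M' ∩ M₁ := by rw [heq]; exact hx
        exact (Finset.mem_inter.1 hx').1
      have g2 : M₂ ⊆ M' := by
        have h := mt (Finset.ssubset_iff_subset_ne.2) hi2
        push_neg at h
        have heq := h Finset.inter_subset_right
        intro x hx
        have hx' : x ∈ M' ∩ M₂ := by rw [heq]; exact hx
        exact (Finset.mem_inter.1 hx').1
      exact hss.not_subset (Finset.union_subset g1 g2)
end

section
/- Let E and X be finite sets of equations and variables, var : E → Finset X, and φ(M) = |M| − |var(M)| for M ⊆ E, where var(M) = ⋃_{e∈M} var(e). For N ⊆ E, if max{φ(M') : M' ⊆ N} ≥ 1, then the overdetermined part N⁺ (the unique smallest subset of N attaining this maximum) is a PSO set. -/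
open Finset

/-- The maximal redundancy attained by subsets of `N`. -/
def maxRed {E X : Type*} [DecidableEq E] [DecidableEq X]
    (var : E → Finset X) (N : Finset E) : ℤ :=
  N.powerset.sup' (Finset.powerset_nonempty N) (red var)

@[simp]
theorem red_empty {E X : Type*} [DecidableEq X] (var : E → Finset X) : red var ∅ = 0 := by
  simp [red]

theorem red_le_maxRed {E X : Type*} [DecidableEq E] [DecidableEq X] (var : E → Finset X)
    {M N : Finset E} (hMN : M ⊆ N) : red var M ≤ maxRed var N :=
  le_sup' (red var) (mem_powerset.mpr hMN)

theorem stmt15_overdetermined_part_is_PSO_general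
    {E X : Type*} [DecidableEq E] [DecidableEq X]
    (var : E → Finset X) (N : Finset E) (hmax : 1 ≤ maxRed var N) :
    ∀ P : Finset E, P ⊆ N → red var P = maxRed var N →
      (∀ Q ⊆ N, red var Q = maxRed var N → P ⊆ Q) → IsPSO var P := by
  intro P hPN hPmax hmin
  refine ⟨nonempty_iff_ne_empty.mpr ?_, fun M hMP => ?_⟩
  · rintro rfl
    rw [red_empty] at hPmax
    omega
  · have hMN : M ⊆ N := hMP.subset.trans hPN
    have hne : red var M ≠ maxRed var N := fun hM => hMP.not_subset (hmin M hMN hM)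
    exact hPmax ▸ (red_le_maxRed var hMN).lt_of_ne hne

/-- If the maximal redundancy over subsets of `N` is at least `1`,
then the overdetermined part `N⁺` — the (unique) smallest subset of `N` attaining the
maximal redundancy — is a PSO set. -/
theorem stmt15_overdetermined_part_is_PSO
    {E X : Type*} [Fintype E] [Fintype X] [DecidableEq E] [DecidableEq X]
    (var : E → Finset X) (N : Finset E) (hmax : 1 ≤ maxRed var N) :
    ∀ P : Finset E, P ⊆ N → red var P = maxRed var N →
      (∀ Q ⊆ N, red var Q = maxRed var N → P ⊆ Q) → IsPSO var P :=
  stmt15_overdetermined_part_is_PSO_general var N hmax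
end
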